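/- arXiv:0812.3431 — 5 statements merged into one kernel-verified Lean document; each statement's English description precedes it below -/
import Mathlib

section
/- An R-module M is strongly Gorenstein projective if and only if there exists a short exact sequence of R-modules 0 → M → P → M → 0 with P projective, and Ext^1_R(M, Q) = 0 for every projective R-module Q. -/
universe u

open LinearMap DirectSum

section Defs

variable (R : Type u) [CommRing R]

/-- `Ext¹_R(M, Q) = 0`, expressed by the splitting of all extensions of `M` by `Q`. -/
def Ext1Zero (M Q : Type u) [AddCommGroup M] [Module R M] [AddCommGroup Q] [Module R Q] :
    Prop :=
  ∀ (E : ModuleCat.{u} R) (i : Q →ₗ[R] E) (p : E →ₗ[R] M),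
    Function.Injective i → Function.Surjective p → LinearMap.range i = LinearMap.ker p →
      ∃ s : M →ₗ[R] E, p ∘ₗ s = LinearMap.id

/-- `Tor₁^R(M, N) = 0`, expressed via flat presentations of `N`:
for every surjection `p : F ↠ N` with `F` flat, `ker p ⊗ M → F ⊗ M` is injective. -/
def Tor1Zero (M N : Type u) [AddCommGroup M] [Module R M] [AddCommGroup N] [Module R N] :
    Prop :=
  ∀ (F : ModuleCat.{u} R), Module.Flat R F →
    ∀ p : F →ₗ[R] N, Function.Surjective p →
      Function.Injective (LinearMap.rTensor M (LinearMap.ker p).subtype)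

/-- `M` is strongly Gorenstein projective: there is an exact complex
`⋯ → P → P → P → ⋯` with a single projective `P` and single differential `f`,
which stays exact under `Hom(-, Q)` for every projective `Q`, and `M ≅ Im f`. -/
def IsSGProjective (M : Type u) [AddCommGroup M] [Module R M] : Prop :=
  ∃ P : ModuleCat.{u} R, Module.Projective R P ∧
    ∃ f : P →ₗ[R] P, f ∘ₗ f = 0 ∧ LinearMap.ker f = LinearMap.range f ∧
      Nonempty (M ≃ₗ[R] LinearMap.range f) ∧
      ∀ Q : ModuleCat.{u} R, Module.Projective R Q →
        ∀ g : P →ₗ[R] Q, g ∘ₗ f = 0 → ∃ h : P →ₗ[R] Q, g = h ∘ₗ f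

/-- `M` is strongly Gorenstein flat: there is an exact complex
`⋯ → F → F → F → ⋯` with a single flat `F` and single differential `f`,
which stays exact under `- ⊗ I` for every injective `I`, and `M ≅ Im f`. -/
def IsSGFlat (M : Type u) [AddCommGroup M] [Module R M] : Prop :=
  ∃ F : ModuleCat.{u} R, Module.Flat R F ∧
    ∃ f : F →ₗ[R] F, f ∘ₗ f = 0 ∧ LinearMap.ker f = LinearMap.range f ∧
      Nonempty (M ≃ₗ[R] LinearMap.range f) ∧
      ∀ I : ModuleCat.{u} R, Module.Injective R I →
        LinearMap.ker (LinearMap.rTensor I f) = LinearMap.range (LinearMap.rTensor I f)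

/-- `M` is Gorenstein projective: it is a syzygy of a totally acyclic complex of
projective modules. -/
def IsGProjective (M : Type u) [AddCommGroup M] [Module R M] : Prop :=
  ∃ (P : ℤ → ModuleCat.{u} R) (d : ∀ i : ℤ, P (i + 1) →ₗ[R] P i),
    (∀ i, Module.Projective R (P i)) ∧
    (∀ i, d i ∘ₗ d (i + 1) = 0) ∧
    (∀ i, LinearMap.ker (d i) = LinearMap.range (d (i + 1))) ∧
    Nonempty (M ≃ₗ[R] LinearMap.range (d 0)) ∧
    ∀ Q : ModuleCat.{u} R, Module.Projective R Q →
      ∀ (i : ℤ) (g : P (i + 1) →ₗ[R] Q), g ∘ₗ d (i + 1) = 0 →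
        ∃ h : P i →ₗ[R] Q, g = h ∘ₗ d i

/-- `M` is Gorenstein flat: it is a syzygy of an exact complex of flat modules
which stays exact under `- ⊗ I` for every injective `I`. -/
def IsGFlat (M : Type u) [AddCommGroup M] [Module R M] : Prop :=
  ∃ (F : ℤ → ModuleCat.{u} R) (d : ∀ i : ℤ, F (i + 1) →ₗ[R] F i),
    (∀ i, Module.Flat R (F i)) ∧
    (∀ i, d i ∘ₗ d (i + 1) = 0) ∧
    (∀ i, LinearMap.ker (d i) = LinearMap.range (d (i + 1))) ∧
    Nonempty (M ≃ₗ[R] LinearMap.range (d 0)) ∧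
    ∀ I : ModuleCat.{u} R, Module.Injective R I →
      ∀ i : ℤ, LinearMap.ker (LinearMap.rTensor I (d i)) =
        LinearMap.range (LinearMap.rTensor I (d (i + 1)))

/-- A class of `R`-modules is projectively resolving if it contains the projectives and,
in every short exact sequence `0 → A → B → C → 0` with `C` in the class, `A` is in the
class iff `B` is. -/
def ProjResolving (X : ModuleCat.{u} R → Prop) : Prop :=
  (∀ P : ModuleCat.{u} R, Module.Projective R P → X P) ∧
  ∀ (A B C : ModuleCat.{u} R) (i : A →ₗ[R] B) (p : B →ₗ[R] C),
    Function.Injective i → Function.Surjective p → LinearMap.range i = LinearMap.ker p →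
      X C → (X A ↔ X B)

/-- Gorenstein projective dimension at most `n`. -/
def GpdLE : ℕ → ModuleCat.{u} R → Prop
  | 0, M => IsGProjective R M
  | n + 1, M => ∃ (G : ModuleCat.{u} R) (p : G →ₗ[R] M),
      IsGProjective R G ∧ Function.Surjective p ∧ GpdLE n (ModuleCat.of R (LinearMap.ker p))

/-- Gorenstein flat dimension at most `n`. -/
def GfdLE : ℕ → ModuleCat.{u} R → Prop
  | 0, M => IsGFlat R M
  | n + 1, M => ∃ (G : ModuleCat.{u} R) (p : G →ₗ[R] M),
      IsGFlat R G ∧ Function.Surjective p ∧ GfdLE n (ModuleCat.of R (LinearMap.ker p))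

/-- Flat dimension at most `n`. -/
def FlatDimLE : ℕ → ModuleCat.{u} R → Prop
  | 0, M => Module.Flat R M
  | n + 1, M => ∃ (G : ModuleCat.{u} R) (p : G →ₗ[R] M),
      Module.Flat R G ∧ Function.Surjective p ∧ FlatDimLE n (ModuleCat.of R (LinearMap.ker p))

/-- Projective dimension at most `n`. -/
def ProjDimLE : ℕ → ModuleCat.{u} R → Prop
  | 0, M => Module.Projective R M
  | n + 1, M => ∃ (G : ModuleCat.{u} R) (p : G →ₗ[R] M),
      Module.Projective R G ∧ Function.Surjective p ∧
        ProjDimLE n (ModuleCat.of R (LinearMap.ker p))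

/-- `R` is a coherent ring: every finitely generated ideal is finitely presented. -/
def IsCoherent : Prop :=
  ∀ I : Ideal R, I.FG → Module.FinitePresentation R I

end Defs

/-! Factoring the differential of the complex `⋯ → P →f P → ⋯` as `P ↠ Im f ≅ M ↪ P` gives the
short exact sequence `0 → M → P → M → 0`, and exactness of `Hom(-, Q)` on the complex says exactly
that every map `M → Q` extends along `M ↪ P`. For a short exact sequence `0 → K → P → M → 0` with
`P` projective, this extension property for maps `K → Q` is equivalent to `Ext¹(M, Q) = 0`: an
extension of `M` by `Q` is split by lifting `P → M` to it and correcting the lift on `K`, and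
conversely a map `K → Q` extends through the retraction of the pushout extension. -/

open Function

namespace LinearMap

section Factorization

variable {R : Type*} [Ring R] {M N P : Type*} [AddCommGroup M] [Module R M]
  [AddCommGroup N] [Module R N] [AddCommGroup P] [Module R P]

theorem exists_comp_eq_of_surjective_of_ker_le {p : M →ₗ[R] N} (hp : Surjective p)
    {g : M →ₗ[R] P} (h : ker p ≤ ker g) : ∃ g' : N →ₗ[R] P, g' ∘ₗ p = g :=
  ⟨(ker p).liftQ g h ∘ₗ (p.quotKerEquivOfSurjective hp).symm.toLinearMap, by
    ext x
    simp⟩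

theorem exists_comp_eq_of_injective_of_range_le {j : P →ₗ[R] N} (hj : Injective j)
    {t : M →ₗ[R] N} (h : range t ≤ range j) : ∃ t' : M →ₗ[R] P, j ∘ₗ t' = t :=
  ⟨(LinearEquiv.ofInjective j hj).symm.toLinearMap ∘ₗ t.codRestrict (range j) (h ⟨·, rfl⟩), by
    ext x
    simp⟩

end Factorization

section

variable {R : Type*} [Ring R] {A B C Q X : Type*} [AddCommGroup A] [Module R A]
  [AddCommGroup B] [Module R B] [AddCommGroup C] [Module R C] [AddCommGroup Q] [Module R Q]
  [AddCommGroup X] [Module R X] (g : A →ₗ[R] Q) (i : A →ₗ[R] B)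

abbrev Pushout : Type _ := (Q × B) ⧸ range (g.prod (-i))

namespace Pushout

def inl : Q →ₗ[R] Pushout g i := (range (g.prod (-i))).mkQ ∘ₗ LinearMap.inl R Q B

def inr : B →ₗ[R] Pushout g i := (range (g.prod (-i))).mkQ ∘ₗ LinearMap.inr R Q B

theorem inl_add_inr (q : Q) (b : B) : inl g i q + inr g i b = Submodule.Quotient.mk (q, b) := by
  simp [inl, inr, ← Submodule.Quotient.mk_add]

theorem inr_comp : inr g i ∘ₗ i = inl g i ∘ₗ g := by
  ext a
  refine (Submodule.Quotient.eq _).mpr ⟨-a, ?_⟩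
  simp

theorem inl_injective (hi : Injective i) : Injective (inl g i) := by
  refine (injective_iff_map_eq_zero _).mpr fun q hq => ?_
  obtain ⟨a, ha⟩ := (Submodule.Quotient.mk_eq_zero _).mp hq
  obtain ⟨rfl, hia⟩ : g a = q ∧ -i a = 0 := by simpa [Prod.ext_iff] using ha
  rw [hi (neg_eq_zero.mp hia |>.trans (map_zero i).symm), map_zero]

def desc (u : Q →ₗ[R] X) (v : B →ₗ[R] X) (h : u ∘ₗ g = v ∘ₗ i) : Pushout g i →ₗ[R] X :=
  (range (g.prod (-i))).liftQ (u.coprod v) <| by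
    rintro _ ⟨a, rfl⟩
    simpa [← sub_eq_add_neg, sub_eq_zero] using LinearMap.congr_fun h a

variable {g i}

@[simp]
theorem desc_inl {u : Q →ₗ[R] X} {v : B →ₗ[R] X} (h : u ∘ₗ g = v ∘ₗ i) (q : Q) :
    desc g i u v h (inl g i q) = u q := by
  simp [desc, inl]

@[simp]
theorem desc_inr {u : Q →ₗ[R] X} {v : B →ₗ[R] X} (h : u ∘ₗ g = v ∘ₗ i) (b : B) :
    desc g i u v h (inr g i b) = v b := by
  simp [desc, inr]

theorem desc_surjective {u : Q →ₗ[R] X} {v : B →ₗ[R] X} (h : u ∘ₗ g = v ∘ₗ i)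
    (hv : Surjective v) : Surjective (desc g i u v h) := fun x =>
  let ⟨b, hb⟩ := hv x
  ⟨inr g i b, by rw [desc_inr, hb]⟩

theorem exact_inl_desc_zero {p : B →ₗ[R] C} (hip : Exact i p) :
    Exact (inl g i) (desc g i 0 p (by rw [zero_comp, hip.linearMap_comp_eq_zero])) := by
  refine exact_of_comp_of_mem_range (by ext; simp) fun z hz => ?_
  obtain ⟨⟨q, b⟩, rfl⟩ := Submodule.mkQ_surjective _ z
  rw [Submodule.mkQ_apply, ← inl_add_inr] at hz ⊢
  obtain ⟨a, rfl⟩ := (hip b).mp (by simpa using hz)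
  exact ⟨q + g a, by rw [map_add, ← comp_apply (inl g i) g, ← inr_comp, comp_apply]⟩

end Pushout

end

end LinearMap

section Ext1Zero

variable {R : Type u} [CommRing R] {K P M Q : Type u} [AddCommGroup K] [Module R K]
  [AddCommGroup P] [Module R P] [AddCommGroup M] [Module R M] [AddCommGroup Q] [Module R Q]

theorem Ext1Zero.exists_comp_eq {i : K →ₗ[R] P} {p : P →ₗ[R] M} (hi : Injective i)
    (hp : Surjective p) (hip : Exact i p) (hM : Ext1Zero R M Q) (g : K →ₗ[R] Q) :
    ∃ h : P →ₗ[R] Q, h ∘ₗ i = g := by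
  have hexact := Pushout.exact_inl_desc_zero (g := g) hip
  have hinl := Pushout.inl_injective g i hi
  have hdesc := Pushout.desc_surjective (g := g) (u := 0)
    (by rw [zero_comp, hip.linearMap_comp_eq_zero]) hp
  obtain ⟨s, hs⟩ := hM (ModuleCat.of R (Pushout g i)) _ _ hinl hdesc hexact.linearMap_ker_eq.symm
  obtain ⟨r, hr⟩ :=
    (hexact.splitInjectiveEquiv hdesc).symm (hexact.splitSurjectiveEquiv hinl ⟨s, hs⟩)
  refine ⟨r ∘ₗ Pushout.inr g i, ?_⟩
  rw [LinearMap.comp_assoc, Pushout.inr_comp, ← LinearMap.comp_assoc, hr, LinearMap.id_comp]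

theorem ext1Zero_of_forall_exists_comp_eq [Module.Projective R P] {k : K →ₗ[R] P}
    {p : P →ₗ[R] M} (hp : Surjective p) (hkp : Exact k p)
    (hext : ∀ g : K →ₗ[R] Q, ∃ h : P →ₗ[R] Q, h ∘ₗ k = g) : Ext1Zero R M Q := by
  intro E ι π hι hπ hιπ
  have hπι : π ∘ₗ ι = 0 := (exact_iff.mpr hιπ.symm).linearMap_comp_eq_zero
  obtain ⟨t, ht⟩ := Module.projective_lifting_property π p hπ
  have htk : range (t ∘ₗ k) ≤ range ι := by
    rintro _ ⟨x, rfl⟩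
    rw [hιπ, mem_ker, ← LinearMap.comp_apply, ← LinearMap.comp_assoc, ht, LinearMap.comp_apply,
      hkp.apply_apply_eq_zero]
  obtain ⟨g, hg⟩ := exists_comp_eq_of_injective_of_range_le hι htk
  obtain ⟨h, rfl⟩ := hext g
  -- correcting `t` by `ι ∘ h` makes it vanish on `range k = ker p`, so it factors through `p`
  obtain ⟨s, hs⟩ := exists_comp_eq_of_surjective_of_ker_le hp (g := t - ι ∘ₗ h) <| by
    rw [hkp.linearMap_ker_eq]
    rintro _ ⟨x, rfl⟩
    simpa [sub_eq_zero] using (LinearMap.congr_fun hg x).symm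
  refine ⟨s, (cancel_right hp).mp ?_⟩
  rw [LinearMap.comp_assoc, hs, comp_sub, ht, ← LinearMap.comp_assoc, hπι, zero_comp, sub_zero,
    LinearMap.id_comp]

end Ext1Zero

section SGProjective

variable {R : Type u} [CommRing R] {M : Type u} [AddCommGroup M] [Module R M]

theorem IsSGProjective.exists_shortExact (hM : IsSGProjective R M) :
    ∃ P : ModuleCat.{u} R, Module.Projective R P ∧
      ∃ (i : M →ₗ[R] P) (p : P →ₗ[R] M), Injective i ∧ Surjective p ∧ range i = ker p ∧
        ∀ Q : ModuleCat.{u} R, Module.Projective R Q →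
          ∀ g : M →ₗ[R] Q, ∃ h : P →ₗ[R] Q, h ∘ₗ i = g := by
  obtain ⟨P, hP, f, hff, hkr, ⟨e⟩, hext⟩ := hM
  have hrange : range ((range f).subtype ∘ₗ e.toLinearMap) = range f := by
    rw [range_comp, LinearEquiv.range, Submodule.map_top, Submodule.range_subtype]
  have hker : ker (e.symm.toLinearMap ∘ₗ f.rangeRestrict) = ker f := by
    rw [LinearEquiv.ker_comp, ker_rangeRestrict]
  refine ⟨P, hP, (range f).subtype ∘ₗ e.toLinearMap, e.symm.toLinearMap ∘ₗ f.rangeRestrict,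
    Subtype.val_injective.comp e.injective, e.symm.surjective.comp f.surjective_rangeRestrict,
    by rw [hrange, hker, hkr], fun Q hQ g => ?_⟩
  obtain ⟨h, hh⟩ := hext Q hQ (g ∘ₗ e.symm.toLinearMap ∘ₗ f.rangeRestrict) <| by
    ext x
    have : f.rangeRestrict (f x) = 0 := Subtype.ext (LinearMap.congr_fun hff x)
    simp [this]
  refine ⟨h, LinearMap.ext fun m => ?_⟩
  obtain ⟨x, hx⟩ := (e m).2
  have : f.rangeRestrict x = e m := Subtype.ext hx
  simpa [this, hx] using (LinearMap.congr_fun hh x).symm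

theorem isSGProjective_of_shortExact {P : ModuleCat.{u} R} [Module.Projective R P]
    {i : M →ₗ[R] P} {p : P →ₗ[R] M} (hi : Injective i) (hp : Surjective p)
    (hip : range i = ker p)
    (hext : ∀ Q : ModuleCat.{u} R, Module.Projective R Q →
      ∀ g : M →ₗ[R] Q, ∃ h : P →ₗ[R] Q, h ∘ₗ i = g) : IsSGProjective R M := by
  have hpi : p ∘ₗ i = 0 := (exact_iff.mpr hip.symm).linearMap_comp_eq_zero
  have hrange : range (i ∘ₗ p) = range i := range_comp_of_range_eq_top i (range_eq_top.mpr hp)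
  have hker : ker (i ∘ₗ p) = ker p := ker_comp_of_ker_eq_bot p (ker_eq_bot.mpr hi)
  refine ⟨P, inferInstance, i ∘ₗ p, ?_, by rw [hker, hrange, hip],
    ⟨(LinearEquiv.ofInjective i hi).trans (LinearEquiv.ofEq _ _ hrange.symm)⟩, fun Q hQ g hg => ?_⟩
  · rw [LinearMap.comp_assoc, ← LinearMap.comp_assoc p, hpi, zero_comp, comp_zero]
  obtain ⟨g', rfl⟩ := exists_comp_eq_of_surjective_of_ker_le hp (g := g) <| by
    rw [← hip]
    rintro _ ⟨m, rfl⟩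
    obtain ⟨x, rfl⟩ := hp m
    exact LinearMap.congr_fun hg x
  obtain ⟨h, rfl⟩ := hext Q hQ g'
  exact ⟨h, (LinearMap.comp_assoc _ _ _).symm⟩

end SGProjective

/-- An `R`-module `M` is strongly Gorenstein projective iff there is a short
exact sequence `0 → M → P → M → 0` with `P` projective and `Ext¹_R(M, Q) = 0` for every
projective `R`-module `Q`. -/
theorem stmt0 (R : Type u) [CommRing R] (M : Type u) [AddCommGroup M] [Module R M] :
    IsSGProjective R M ↔
      (∃ (P : ModuleCat.{u} R), Module.Projective R P ∧
        ∃ (i : M →ₗ[R] P) (p : P →ₗ[R] M),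
          Function.Injective i ∧ Function.Surjective p ∧
            LinearMap.range i = LinearMap.ker p) ∧
      ∀ Q : ModuleCat.{u} R, Module.Projective R Q → Ext1Zero R M Q := by
  constructor
  · intro hM
    obtain ⟨P, hP, i, p, hi, hp, hip, hext⟩ := hM.exists_shortExact
    exact ⟨⟨P, hP, i, p, hi, hp, hip⟩, fun Q hQ =>
      ext1Zero_of_forall_exists_comp_eq hp (exact_iff.mpr hip.symm) (hext Q hQ)⟩
  · rintro ⟨⟨P, hP, i, p, hi, hp, hip⟩, hExt⟩
    exact isSGProjective_of_shortExact hi hp hip fun Q hQ =>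
      (hExt Q hQ).exists_comp_eq hi hp (exact_iff.mpr hip.symm)
end

section
/- An R-module M is strongly Gorenstein flat if and only if there exists a short exact sequence of R-modules 0 → M → F → M → 0 with F flat, and Tor^R_1(M, I) = 0 for every injective R-module I. -/
universe u

open LinearMap DirectSum

section Aux

open Function LinearMap

variable {R : Type u} [CommRing R]

/-- An abstract diagram chase in a 3×3-style commutative diagram, proving injectivity of a
bottom horizontal map. -/
private theorem diagram_chase
    {N11 N12 N13 N21 N22 N23 N31 N32 : Type*}
    [AddCommGroup N11] [Module R N11] [AddCommGroup N12] [Module R N12]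
    [AddCommGroup N13] [Module R N13] [AddCommGroup N21] [Module R N21]
    [AddCommGroup N22] [Module R N22] [AddCommGroup N23] [Module R N23]
    [AddCommGroup N31] [Module R N31] [AddCommGroup N32] [Module R N32]
    {f1 : N11 →ₗ[R] N12} {g1 : N12 →ₗ[R] N13}
    {f2 : N21 →ₗ[R] N22} {g2 : N22 →ₗ[R] N23}
    {f3 : N31 →ₗ[R] N32}
    {d1 : N11 →ₗ[R] N21} {d2 : N12 →ₗ[R] N22} {d3 : N13 →ₗ[R] N23}
    {e1 : N21 →ₗ[R] N31} {e2 : N22 →ₗ[R] N32}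
    (sq1 : d2 ∘ₗ f1 = f2 ∘ₗ d1) (sq2 : e2 ∘ₗ f2 = f3 ∘ₗ e1)
    (sq3 : d3 ∘ₗ g1 = g2 ∘ₗ d2)
    (he1 : Surjective e1)
    (hex2 : ∀ x, e2 x = 0 → ∃ y, d2 y = x)
    (hg2f2 : g2 ∘ₗ f2 = 0)
    (hd3 : Injective d3)
    (hex1 : ∀ x, g1 x = 0 → ∃ y, f1 y = x)
    (hf2 : Injective f2)
    (he1d1 : e1 ∘ₗ d1 = 0) :
    Injective f3 := by
  rw [injective_iff_map_eq_zero]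
  intro x hx
  obtain ⟨y, rfl⟩ := he1 x
  have h1 : e2 (f2 y) = 0 := by
    have h := LinearMap.congr_fun sq2 y
    simp only [LinearMap.comp_apply] at h
    rw [h, hx]
  obtain ⟨z, hz⟩ := hex2 _ h1
  have h2 : g1 z = 0 := by
    apply hd3
    have h := LinearMap.congr_fun sq3 z
    simp only [LinearMap.comp_apply] at h
    rw [map_zero, h, hz]
    simpa using LinearMap.congr_fun hg2f2 y
  obtain ⟨w, hw⟩ := hex1 _ h2
  have h3 : f2 (d1 w) = f2 y := by
    have h := LinearMap.congr_fun sq1 w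
    simp only [LinearMap.comp_apply] at h
    rw [← h, hw, hz]
  rw [← hf2 h3]
  simpa using LinearMap.congr_fun he1d1 w

/-- From a strongly Gorenstein flat complex datum, the inclusion of the cycle submodule stays
injective after tensoring with `I` on the right. -/
private theorem subtype_rTensor_injective {G : Type u} [AddCommGroup G] [Module R G]
    (f : G →ₗ[R] G) (hff : f ∘ₗ f = 0)
    {I : Type u} [AddCommGroup I] [Module R I]
    (hI : LinearMap.ker (LinearMap.rTensor I f) = LinearMap.range (LinearMap.rTensor I f)) :
    Injective (LinearMap.rTensor I (LinearMap.range f).subtype) := by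
  rw [injective_iff_map_eq_zero]
  intro u hu
  obtain ⟨v, rfl⟩ := LinearMap.rTensor_surjective I f.surjective_rangeRestrict u
  have hsub : (LinearMap.range f).subtype ∘ₗ f.rangeRestrict = f := by ext x; rfl
  have h1 : LinearMap.rTensor I f v = 0 := by
    rw [← hsub, LinearMap.rTensor_comp, LinearMap.comp_apply]
    exact hu
  have h2 : v ∈ LinearMap.range (LinearMap.rTensor I f) := by rw [← hI]; exact h1
  obtain ⟨w, hw⟩ := h2
  have hrrf : f.rangeRestrict ∘ₗ f = 0 := by
    ext x
    have h := LinearMap.congr_fun hff x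
    simp only [LinearMap.comp_apply, LinearMap.zero_apply] at h ⊢
    simpa using h
  rw [← hw, ← LinearMap.rTensor_comp_apply, hrrf]
  simp

/-- Given `0 → M → G → M → 0` with `G` flat such that `I ⊗ i` stays injective, every flat
presentation of `I` witnesses `Tor₁(I, M) = 0`. -/
private theorem tor1_of_ses {M G : Type u} [AddCommGroup M] [Module R M]
    [AddCommGroup G] [Module R G] [Module.Flat R G]
    {i : M →ₗ[R] G} {p : G →ₗ[R] M} (hip : LinearMap.range i = LinearMap.ker p)
    (hp : Surjective p)
    {I : Type u} [AddCommGroup I] [Module R I]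
    (hIi : Injective (LinearMap.lTensor I i))
    {F' : Type u} [AddCommGroup F'] [Module R F'] [Module.Flat R F']
    (q : F' →ₗ[R] I) (hq : Surjective q) :
    Injective (LinearMap.rTensor M (LinearMap.ker q).subtype) := by
  set K := LinearMap.ker q with hK
  have hexjq : Function.Exact K.subtype q := by
    rw [LinearMap.exact_iff, Submodule.range_subtype]
  have hexip : Function.Exact i p := LinearMap.exact_iff.mpr hip.symm
  have hpi : p ∘ₗ i = 0 := by
    ext m
    have : i m ∈ LinearMap.ker p := hip ▸ LinearMap.mem_range_self i m
    simpa using this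
  have hqj : q ∘ₗ K.subtype = 0 := by
    ext k
    simpa using k.2
  refine diagram_chase (R := R)
    (f1 := LinearMap.rTensor M K.subtype) (g1 := LinearMap.rTensor M q)
    (f2 := LinearMap.rTensor G K.subtype) (g2 := LinearMap.rTensor G q)
    (f3 := LinearMap.rTensor M K.subtype)
    (d1 := LinearMap.lTensor K i) (d2 := LinearMap.lTensor F' i) (d3 := LinearMap.lTensor I i)
    (e1 := LinearMap.lTensor K p) (e2 := LinearMap.lTensor F' p)
    ?_ ?_ ?_ ?_ ?_ ?_ hIi ?_ ?_ ?_
  · rw [LinearMap.lTensor_comp_rTensor, LinearMap.rTensor_comp_lTensor]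
  · rw [LinearMap.lTensor_comp_rTensor, LinearMap.rTensor_comp_lTensor]
  · rw [LinearMap.lTensor_comp_rTensor, LinearMap.rTensor_comp_lTensor]
  · exact LinearMap.lTensor_surjective _ hp
  · intro x hx
    exact (Module.Flat.lTensor_exact F' hexip x).mp hx
  · rw [← LinearMap.rTensor_comp, hqj]
    ext x y
    simp
  · intro x hx
    exact (rTensor_exact M hexjq hq x).mp hx
  · exact Module.Flat.rTensor_preserves_injective_linearMap K.subtype (Submodule.injective_subtype K)
  · rw [← LinearMap.lTensor_comp, hpi]
    ext x y
    simp

/-- Given `0 → M → F → M → 0` with `F` flat and `i` injective, if some flat presentation of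
`I` witnesses `Tor₁(I, M) = 0`, then `i ⊗ I` stays injective. -/
private theorem inj_of_tor1 {M F : Type u} [AddCommGroup M] [Module R M]
    [AddCommGroup F] [Module R F] [Module.Flat R F]
    {i : M →ₗ[R] F} {p : F →ₗ[R] M} (hi : Injective i)
    (hip : LinearMap.range i = LinearMap.ker p) (hp : Surjective p)
    {I : Type u} [AddCommGroup I] [Module R I]
    {F' : Type u} [AddCommGroup F'] [Module R F'] [Module.Flat R F']
    (q : F' →ₗ[R] I) (hq : Surjective q)
    (hj : Injective (LinearMap.lTensor M (LinearMap.ker q).subtype)) :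
    Injective (LinearMap.rTensor I i) := by
  set K := LinearMap.ker q with hK
  have hexjq : Function.Exact K.subtype q := by
    rw [LinearMap.exact_iff, Submodule.range_subtype]
  have hexip : Function.Exact i p := LinearMap.exact_iff.mpr hip.symm
  have hpi : p ∘ₗ i = 0 := by
    ext m
    have : i m ∈ LinearMap.ker p := hip ▸ LinearMap.mem_range_self i m
    simpa using this
  have hqj : q ∘ₗ K.subtype = 0 := by
    ext k
    simpa using k.2
  refine diagram_chase (R := R)
    (f1 := LinearMap.rTensor K i) (g1 := LinearMap.rTensor K p)
    (f2 := LinearMap.rTensor F' i) (g2 := LinearMap.rTensor F' p)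
    (f3 := LinearMap.rTensor I i)
    (d1 := LinearMap.lTensor M K.subtype) (d2 := LinearMap.lTensor F K.subtype)
    (d3 := LinearMap.lTensor M K.subtype)
    (e1 := LinearMap.lTensor M q) (e2 := LinearMap.lTensor F q)
    ?_ ?_ ?_ ?_ ?_ ?_ hj ?_ ?_ ?_
  · rw [LinearMap.lTensor_comp_rTensor, LinearMap.rTensor_comp_lTensor]
  · rw [LinearMap.lTensor_comp_rTensor, LinearMap.rTensor_comp_lTensor]
  · rw [LinearMap.lTensor_comp_rTensor, LinearMap.rTensor_comp_lTensor]
  · exact LinearMap.lTensor_surjective _ hq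
  · intro x hx
    exact (Module.Flat.lTensor_exact F hexjq x).mp hx
  · rw [← LinearMap.rTensor_comp, hpi]
    ext x y
    simp
  · intro x hx
    exact (rTensor_exact K hexip hp x).mp hx
  · exact Module.Flat.rTensor_preserves_injective_linearMap i hi
  · rw [← LinearMap.lTensor_comp, hqj]
    ext x y
    simp

end Aux

/-- An `R`-module `M` is strongly Gorenstein flat iff there is a short exact
sequence `0 → M → F → M → 0` with `F` flat and `Tor₁^R(M, I) = 0` for every injective
`R`-module `I`. -/
theorem stmt1 (R : Type u) [CommRing R] (M : Type u) [AddCommGroup M] [Module R M] :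
    IsSGFlat R M ↔
      (∃ (F : ModuleCat.{u} R), Module.Flat R F ∧
        ∃ (i : M →ₗ[R] F) (p : F →ₗ[R] M),
          Function.Injective i ∧ Function.Surjective p ∧
            LinearMap.range i = LinearMap.ker p) ∧
      ∀ I : ModuleCat.{u} R, Module.Injective R I → Tor1Zero R M I := by
  constructor
  · rintro ⟨G, hGflat, f, hff, hker, ⟨e⟩, hI⟩
    haveI := hGflat
    set i : M →ₗ[R] G := (LinearMap.range f).subtype ∘ₗ (e : M →ₗ[R] LinearMap.range f)
      with hidef
    set p : G →ₗ[R] M := (e.symm : LinearMap.range f →ₗ[R] M) ∘ₗ f.rangeRestrict with hpdef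
    have hi : Function.Injective i := by
      rw [hidef, LinearMap.coe_comp]
      exact (Submodule.injective_subtype _).comp e.injective
    have hp : Function.Surjective p := by
      rw [hpdef, LinearMap.coe_comp]
      exact e.symm.surjective.comp f.surjective_rangeRestrict
    have hrange : LinearMap.range i = LinearMap.range f := by
      rw [hidef, LinearMap.range_comp, LinearEquiv.range, Submodule.map_top,
        Submodule.range_subtype]
    have hkerp : LinearMap.ker p = LinearMap.ker f := by
      rw [hpdef, LinearMap.ker_comp, LinearEquiv.ker, Submodule.comap_bot,
        LinearMap.ker_rangeRestrict]
    have hip : LinearMap.range i = LinearMap.ker p := by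
      rw [hrange, hkerp, hker]
    refine ⟨⟨G, hGflat, i, p, hi, hp, hip⟩, ?_⟩
    intro I hInj F' hF' q hq
    haveI := hF'
    have hsubI : Function.Injective (LinearMap.rTensor I (LinearMap.range f).subtype) :=
      subtype_rTensor_injective f hff (hI I hInj)
    have heI : Function.Injective (LinearMap.rTensor I (e : M →ₗ[R] LinearMap.range f)) := by
      intro a b hab
      have h2 := congrArg (LinearMap.rTensor (I : Type u)
        (e.symm : LinearMap.range f →ₗ[R] M)) hab
      rwa [← LinearMap.rTensor_comp_apply, ← LinearMap.rTensor_comp_apply,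
        (by ext x; simp :
          ((e.symm : LinearMap.range f →ₗ[R] M) ∘ₗ (e : M →ₗ[R] LinearMap.range f))
            = LinearMap.id),
        LinearMap.rTensor_id, LinearMap.id_apply, LinearMap.id_apply] at h2
    have hiI : Function.Injective (LinearMap.rTensor I i) := by
      rw [hidef, LinearMap.rTensor_comp, LinearMap.coe_comp]
      exact hsubI.comp heI
    have hiIl : Function.Injective (LinearMap.lTensor I i) :=
      (LinearMap.lTensor_inj_iff_rTensor_inj _ _).mpr hiI
    exact tor1_of_ses hip hp hiIl q hq
  · rintro ⟨⟨F, hF, i, p, hi, hp, hip⟩, htor⟩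
    haveI := hF
    have hpi : p ∘ₗ i = 0 := by
      ext m
      have : i m ∈ LinearMap.ker p := hip ▸ LinearMap.mem_range_self i m
      simpa using this
    set f : F →ₗ[R] F := i ∘ₗ p with hfdef
    have hff : f ∘ₗ f = 0 := by
      ext x
      have h := LinearMap.congr_fun hpi (p x)
      simp only [LinearMap.comp_apply, LinearMap.zero_apply] at h ⊢
      rw [hfdef]
      simp only [LinearMap.comp_apply]
      rw [h, map_zero]
    have hrangef : LinearMap.range f = LinearMap.range i := by
      rw [hfdef, LinearMap.range_comp, LinearMap.range_eq_top.mpr hp, Submodule.map_top]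
    have hkerf : LinearMap.ker f = LinearMap.ker p := by
      rw [hfdef, LinearMap.ker_comp, LinearMap.ker_eq_bot.mpr hi, Submodule.comap_bot]
    have hkerrange : LinearMap.ker f = LinearMap.range f := by
      rw [hkerf, hrangef, hip]
    refine ⟨F, hF, f, hff, hkerrange, ⟨(LinearEquiv.ofInjective i hi).trans
      (LinearEquiv.ofEq _ _ hrangef.symm)⟩, ?_⟩
    intro I hInj
    set q : (I →₀ R) →ₗ[R] I := Finsupp.linearCombination R _root_.id with hqdef
    have hq : Function.Surjective q := Finsupp.linearCombination_surjective R Function.surjective_id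
    have htorI : Function.Injective (LinearMap.rTensor M (LinearMap.ker q).subtype) :=
      htor I hInj (ModuleCat.of R (I →₀ R)) (inferInstanceAs (Module.Flat R ((I : Type u) →₀ R))) q hq
    have htorIl : Function.Injective (LinearMap.lTensor M (LinearMap.ker q).subtype) :=
      (LinearMap.lTensor_inj_iff_rTensor_inj _ _).mpr htorI
    have hiI : Function.Injective (LinearMap.rTensor I i) :=
      inj_of_tor1 hi hip hp q hq htorIl
    have hexip : Function.Exact i p := LinearMap.exact_iff.mpr hip.symm
    have hexT : Function.Exact (LinearMap.rTensor I i) (LinearMap.rTensor I p) :=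
      rTensor_exact (I : Type u) hexip hp
    rw [hfdef, LinearMap.rTensor_comp, LinearMap.ker_comp, LinearMap.ker_eq_bot.mpr hiI,
      Submodule.comap_bot, LinearMap.exact_iff.mp hexT, LinearMap.range_comp,
      LinearMap.range_eq_top.mpr (LinearMap.rTensor_surjective (I : Type u) hp),
      Submodule.map_top]
end

section
/- The class of strongly Gorenstein projective R-modules is closed under arbitrary direct sums. -/
universe u

open LinearMap DirectSum

/-! The sum of the defining complexes `⋯ → Pᵢ →fᵢ Pᵢ → ⋯` is again such a complex, with
projective term `⨁ Pᵢ` and differential `⨁ fᵢ`: exactness and images are computed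
componentwise, and a map `⨁ Pᵢ → Q` killing `Im (⨁ fᵢ)` factors through `⨁ fᵢ` because each of
its components factors through `fᵢ`. -/

namespace DirectSum

variable {R ι : Type*} [Semiring R] {M N : ι → Type*}
  [∀ i, AddCommMonoid (M i)] [∀ i, Module R (M i)]
  [∀ i, AddCommMonoid (N i)] [∀ i, Module R (N i)]

theorem ker_lmap_eq_range_lmap {L : ι → Type*} [∀ i, AddCommMonoid (L i)] [∀ i, Module R (L i)]
    {f : ∀ i, M i →ₗ[R] N i} {g : ∀ i, N i →ₗ[R] L i} (h : ∀ i, ker (g i) = range (f i)) :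
    ker (lmap g) = range (lmap f) := by
  simp only [ker_lmap, range_lmap, h]

noncomputable def rangeLmapEquiv (f : ∀ i, M i →ₗ[R] N i) :
    (⨁ i, range (f i)) ≃ₗ[R] range (lmap f) :=
  (LinearEquiv.ofInjective (lmap fun i ↦ (range (f i)).subtype)
      ((lmap_injective _).2 fun _ ↦ Subtype.val_injective)).trans <|
    LinearEquiv.ofEq _ _ <| by simp only [range_lmap, Submodule.range_subtype]

theorem lmap_comp_lof [DecidableEq ι] (f : ∀ i, M i →ₗ[R] N i) (i : ι) :
    lmap f ∘ₗ lof R ι M i = lof R ι N i ∘ₗ f i :=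
  LinearMap.ext (lmap_lof f i)

theorem exists_eq_comp_lmap [DecidableEq ι] {Q : Type*} [AddCommMonoid Q] [Module R Q]
    {f : ∀ i, M i →ₗ[R] N i} {g : (⨁ i, M i) →ₗ[R] Q}
    (h : ∀ i, ∃ h : N i →ₗ[R] Q, g ∘ₗ lof R ι M i = h ∘ₗ f i) :
    ∃ h : (⨁ i, N i) →ₗ[R] Q, g = h ∘ₗ lmap f := by
  choose h hg using h
  refine ⟨toModule R ι Q h, linearMap_ext R fun i ↦ ?_⟩
  rw [hg, comp_assoc, lmap_comp_lof, ← comp_assoc]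
  congr 1
  exact LinearMap.ext fun x ↦ (toModule_lof R i x).symm

end DirectSum

/-- The class of strongly Gorenstein projective `R`-modules is closed under
arbitrary direct sums. -/
theorem stmt3 (R : Type u) [CommRing R] (ι : Type u) (M : ι → ModuleCat.{u} R)
    (h : ∀ i, IsSGProjective R (M i)) :
    IsSGProjective R (⨁ i, (M i : Type u)) := by
  classical
  choose P hP f _ hker hM hlift using h
  have hker_sum : ker (lmap f) = range (lmap f) := ker_lmap_eq_range_lmap hker
  refine ⟨ModuleCat.of R (⨁ i, (P i : Type u)), inferInstance, lmap f,
    range_le_ker_iff.mp hker_sum.ge, hker_sum,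
    ⟨(congrLinearEquiv fun i ↦ (hM i).some).trans (rangeLmapEquiv f)⟩, ?_⟩
  intro Q hQ g hg
  refine exists_eq_comp_lmap fun i ↦ hlift i Q hQ _ ?_
  rw [comp_assoc, ← lmap_comp_lof, ← comp_assoc, hg, zero_comp]
end

section
/- A projectively resolving class of R-modules that is closed under countable direct sums is closed under direct summands. -/
universe u

open LinearMap DirectSum

/-!
Eilenberg swindle: if `N = M ⊕ K` lies in the class, so does
`Y = ⨁ₙ N ≅ M ⊕ (K ⊕ M) ⊕ (K ⊕ M) ⊕ ⋯`. Moving every `M`-summand one step to the left is a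
surjection `Y → Y` whose kernel is the first copy of `M`, so the short exact sequence
`0 → M → Y → Y → 0` puts `M` in the class.
-/

lemma LinearMap.isIdempotentElem_comp_of_comp_eq_id {R M N : Type*} [Semiring R]
    [AddCommMonoid M] [Module R M] [AddCommMonoid N] [Module R N]
    {i : M →ₗ[R] N} {r : N →ₗ[R] M} (hri : r ∘ₗ i = LinearMap.id) :
    IsIdempotentElem (i ∘ₗ r) := by
  rw [IsIdempotentElem, Module.End.mul_eq_comp, LinearMap.comp_assoc,
    ← LinearMap.comp_assoc r, hri, LinearMap.id_comp]

namespace DirectSum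

variable {R : Type*} [Ring R] {N : Type*} [AddCommGroup N] [Module R N]

local notation "Y" => ⨁ _ : ℕ, N

def swindleShift (e : N →ₗ[R] N) : Y →ₗ[R] Y :=
  toModule R ℕ Y fun
    | 0 => lof R ℕ _ 0 ∘ₗ (LinearMap.id - e)
    | n + 1 => lof R ℕ _ (n + 1) ∘ₗ (LinearMap.id - e) + lof R ℕ _ n ∘ₗ e

def swindleUnshift (e : N →ₗ[R] N) : Y →ₗ[R] Y :=
  toModule R ℕ Y fun n => lof R ℕ _ n ∘ₗ (LinearMap.id - e) + lof R ℕ _ (n + 1) ∘ₗ e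

variable (e : N →ₗ[R] N)

@[simp]
lemma swindleShift_lof_zero (x : N) :
    swindleShift e (lof R ℕ _ 0 x) = lof R ℕ _ 0 (x - e x) :=
  toModule_lof R _ _

@[simp]
lemma swindleShift_lof_succ (n : ℕ) (x : N) :
    swindleShift e (lof R ℕ _ (n + 1) x) = lof R ℕ _ (n + 1) (x - e x) + lof R ℕ _ n (e x) :=
  toModule_lof R _ _

@[simp]
lemma swindleUnshift_lof (n : ℕ) (x : N) :
    swindleUnshift e (lof R ℕ _ n x) = lof R ℕ _ n (x - e x) + lof R ℕ _ (n + 1) (e x) :=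
  toModule_lof R _ _

variable {e}

lemma swindleShift_comp_swindleUnshift (he : IsIdempotentElem e) :
    swindleShift e ∘ₗ swindleUnshift e = LinearMap.id := by
  have hee (x : N) : e (e x) = e x := LinearMap.congr_fun he.eq x
  refine linearMap_ext R fun n => LinearMap.ext fun x => ?_
  cases n <;> simp [hee, map_sub]

lemma swindleUnshift_comp_swindleShift (he : IsIdempotentElem e) :
    swindleUnshift e ∘ₗ swindleShift e =
      LinearMap.id - lof R ℕ _ 0 ∘ₗ e ∘ₗ component R ℕ _ 0 := by
  have hee (x : N) : e (e x) = e x := LinearMap.congr_fun he.eq x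
  refine linearMap_ext R fun n => LinearMap.ext fun x => ?_
  cases n <;> simp [hee, map_sub, component.of]

lemma surjective_swindleShift (he : IsIdempotentElem e) : Function.Surjective (swindleShift e) :=
  LinearMap.surjective_of_comp_eq_id _ _ (swindleShift_comp_swindleUnshift he)

lemma ker_swindleShift (he : IsIdempotentElem e) :
    LinearMap.ker (swindleShift e) = LinearMap.range (lof R ℕ _ 0 ∘ₗ e) := by
  have hee (x : N) : e (e x) = e x := LinearMap.congr_fun he.eq x
  apply le_antisymm
  · intro y hy
    have h := LinearMap.congr_fun (swindleUnshift_comp_swindleShift he) y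
    rw [LinearMap.comp_apply, LinearMap.mem_ker.1 hy, map_zero, eq_comm, LinearMap.sub_apply,
      sub_eq_zero] at h
    exact ⟨component R ℕ _ 0 y, h.symm⟩
  · rintro _ ⟨x, rfl⟩
    simp [hee]

lemma range_lof_zero_comp_eq_ker_swindleShift {M : Type*} [AddCommGroup M] [Module R M]
    {i : M →ₗ[R] N} {r : N →ₗ[R] M} (hri : r ∘ₗ i = LinearMap.id) :
    LinearMap.range (lof R ℕ _ 0 ∘ₗ i) = LinearMap.ker (swindleShift (i ∘ₗ r)) := by
  rw [ker_swindleShift (LinearMap.isIdempotentElem_comp_of_comp_eq_id hri),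
    ← LinearMap.comp_assoc, LinearMap.range_comp_of_range_eq_top _
      (LinearMap.range_eq_top.2 (LinearMap.surjective_of_comp_eq_id _ _ hri))]

end DirectSum

theorem stmt5_general (R : Type u) [CommRing R] (X : ModuleCat.{u} R → Prop)
    (hres : ProjResolving R X)
    (hsum : ∀ M : ℕ → ModuleCat.{u} R, (∀ n, X (M n)) →
      X (ModuleCat.of R (⨁ n, (M n : Type u)))) :
    ∀ (N M : ModuleCat.{u} R) (i : M →ₗ[R] N) (r : N →ₗ[R] M),
      r ∘ₗ i = LinearMap.id → X N → X M := by
  intro N M i r hri hN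
  have hY : X (ModuleCat.of R (⨁ _ : ℕ, N)) := hsum (fun _ => N) fun _ => hN
  have hi : Function.Injective (lof R ℕ (fun _ => N) 0 ∘ₗ i) :=
    (DirectSum.of_injective 0).comp (LinearMap.injective_of_comp_eq_id _ _ hri)
  have he : IsIdempotentElem (i ∘ₗ r) := LinearMap.isIdempotentElem_comp_of_comp_eq_id hri
  exact (hres.2 M _ _ _ _ hi (surjective_swindleShift he)
    (range_lof_zero_comp_eq_ker_swindleShift hri) hY).2 hY

/-- A projectively resolving class of `R`-modules (closed under isomorphisms,
as any class of modules is) that is closed under countable direct sums is closed under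
direct summands. -/
theorem stmt5 (R : Type u) [CommRing R] (X : ModuleCat.{u} R → Prop)
    (hres : ProjResolving R X)
    (hiso : ∀ M N : ModuleCat.{u} R, (M ≃ₗ[R] N) → X M → X N)
    (hsum : ∀ M : ℕ → ModuleCat.{u} R, (∀ n, X (M n)) →
      X (ModuleCat.of R (⨁ n, (M n : Type u)))) :
    ∀ (N M : ModuleCat.{u} R) (i : M →ₗ[R] N) (r : N →ₗ[R] M),
      r ∘ₗ i = LinearMap.id → X N → X M :=
  stmt5_general R X hres hsum
end

section
/- Let R be a ring such that every flat R-module is projective (i.e., R is perfect) and with finite Gorenstein global dimension n. If N admits a short exact sequence 0 → N → F → N → 0 with F flat, then Ext^1_R(N, P) = 0 for every projective R-module P, so N is strongly Gorenstein projective. -/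
/-!
For a Gorenstein projective `G` and a projective `Q`, the Hom-exactness of a totally acyclic
complex makes `Ext¹(K, Q)` vanish for every syzygy `K` of the complex, and dimension shifting
along it gives `Extᵏ(G, Q) = 0` for all `k ≥ 1`; hence `Gpd M ≤ n` forces `Extⁿ⁺¹(M, Q) = 0`.
Over a perfect ring `F` is projective, so `0 → N → F → N → 0` exhibits `N` as its own syzygy and
`Ext¹(N, Q) ↪ Ext²(N, Q) ↪ ⋯ ↪ Extⁿ⁺¹(N, Q) = 0`. The vanishing of `Ext¹(N, Q)` splits every
extension of `N` by `Q` and lets maps `N → Q` extend along `i`; as `p` is onto, a map `F → Q`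
killing `i ∘ p` kills `i`, so it factors through `p` and then through `i ∘ p`.
-/

universe u

open LinearMap DirectSum

universe w

namespace CategoryTheory

open Abelian

variable {C : Type*} [Category C] [Abelian C] [HasExt.{w} C]

lemma Abelian.Ext.subsingleton_of_iso {X X' Y : C} (e : X ≅ X') {n : ℕ}
    (h : Subsingleton (Ext.{w} X Y n)) : Subsingleton (Ext.{w} X' Y n) := by
  refine subsingleton_of_forall_eq 0 fun x => ?_
  rw [← x.mk₀_id_comp, ← e.inv_hom_id, ← Ext.mk₀_comp_mk₀, Ext.comp_assoc_of_second_deg_zero,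
    Subsingleton.elim ((Ext.mk₀ e.hom).comp x (zero_add n)) 0, Ext.comp_zero]

namespace ShortComplex.ShortExact

variable {S : ShortComplex C} (hS : S.ShortExact) {Y : C}
include hS

lemma subsingleton_ext_X₃_succ {n : ℕ} (h₁ : Subsingleton (Ext.{w} S.X₁ Y n))
    (h₂ : Subsingleton (Ext.{w} S.X₂ Y (n + 1))) : Subsingleton (Ext.{w} S.X₃ Y (n + 1)) := by
  refine subsingleton_of_forall_eq 0 fun x₃ => ?_
  obtain ⟨x₁, rfl⟩ := Ext.contravariant_sequence_exact₃ hS _ x₃ (Subsingleton.elim _ _)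
    (add_comm 1 n)
  rw [Subsingleton.elim x₁ 0, Ext.comp_zero]

lemma subsingleton_ext_X₁ {n : ℕ} (h₂ : Subsingleton (Ext.{w} S.X₂ Y n))
    (h₃ : Subsingleton (Ext.{w} S.X₃ Y (n + 1))) : Subsingleton (Ext.{w} S.X₁ Y n) := by
  refine subsingleton_of_forall_eq 0 fun x₁ => ?_
  obtain ⟨x₂, rfl⟩ := Ext.contravariant_sequence_exact₁ hS _ x₁ (add_comm 1 n)
    (Subsingleton.elim _ _)
  rw [Subsingleton.elim x₂ 0, Ext.comp_zero]

lemma subsingleton_ext_one_X₃ (hY : ∀ φ : S.X₁ ⟶ Y, ∃ ψ : S.X₂ ⟶ Y, S.f ≫ ψ = φ)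
    (h₂ : Subsingleton (Ext.{w} S.X₂ Y 1)) : Subsingleton (Ext.{w} S.X₃ Y 1) := by
  refine subsingleton_of_forall_eq 0 fun x₃ => ?_
  obtain ⟨x₁, rfl⟩ := Ext.contravariant_sequence_exact₃ hS _ x₃ (Subsingleton.elim _ _)
    (add_zero 1)
  obtain ⟨ψ, hψ⟩ := hY (Ext.homEquiv₀ x₁)
  rw [← Ext.mk₀_homEquiv₀_apply x₁, ← hψ, ← Ext.mk₀_comp_mk₀, hS.extClass_comp_assoc]

lemma exists_f_comp_eq (h₃ : Subsingleton (Ext.{w} S.X₃ Y 1)) (φ : S.X₁ ⟶ Y) :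
    ∃ ψ : S.X₂ ⟶ Y, S.f ≫ ψ = φ := by
  obtain ⟨x₂, hx₂⟩ := Ext.contravariant_sequence_exact₁ hS _ (Ext.mk₀ φ) (add_zero 1)
    (Subsingleton.elim _ _)
  refine ⟨Ext.homEquiv₀ x₂, (Ext.mk₀_bijective _ _).1 ?_⟩
  rw [← Ext.mk₀_comp_mk₀, Ext.mk₀_homEquiv₀_apply, hx₂]

lemma exists_comp_g_eq_id (h₃ : Subsingleton (Ext.{w} S.X₃ S.X₁ 1)) :
    ∃ s : S.X₃ ⟶ S.X₂, s ≫ S.g = 𝟙 S.X₃ := by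
  obtain ⟨x₂, hx₂⟩ := Ext.covariant_sequence_exact₃ _ hS (Ext.mk₀ (𝟙 S.X₃)) (zero_add 1)
    (Subsingleton.elim _ _)
  refine ⟨Ext.homEquiv₀ x₂, (Ext.mk₀_bijective _ _).1 ?_⟩
  rw [← Ext.mk₀_comp_mk₀, Ext.mk₀_homEquiv₀_apply, hx₂]

end ShortComplex.ShortExact

end CategoryTheory

open CategoryTheory Abelian

section Modules

variable {R : Type u} [CommRing R]

lemma shortExact_moduleCatMk {A B C : Type u} [AddCommGroup A] [Module R A] [AddCommGroup B]
    [Module R B] [AddCommGroup C] [Module R C] {f : A →ₗ[R] B} {g : B →ₗ[R] C}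
    (hfg : Function.Exact f g) (hf : Function.Injective f) (hg : Function.Surjective g) :
    (ShortComplex.moduleCatMk f g hfg.linearMap_comp_eq_zero).ShortExact :=
  ModuleCat.shortComplex_shortExact _ hfg hf hg

lemma ext1Zero_of_subsingleton_ext {M Q : Type u} [AddCommGroup M] [Module R M] [AddCommGroup Q]
    [Module R Q] (h : Subsingleton (Ext.{u} (ModuleCat.of R M) (ModuleCat.of R Q) 1)) :
    Ext1Zero R M Q := by
  intro E i p hi hp he
  have hS := shortExact_moduleCatMk (LinearMap.exact_iff.mpr he.symm) hi hp
  obtain ⟨s, hs⟩ := hS.exists_comp_g_eq_id h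
  exact ⟨s.hom, congrArg ModuleCat.Hom.hom hs⟩

lemma subsingleton_ext_of_isGProjective {G : Type u} [AddCommGroup G] [Module R G]
    (hG : IsGProjective R G) (Y : ModuleCat.{u} R) [Module.Projective R Y] (k : ℕ) :
    Subsingleton (Ext.{u} (ModuleCat.of R G) Y (k + 1)) := by
  obtain ⟨P, d, hP, hcomp, hker, ⟨e⟩, hfact⟩ := hG
  have hS (j : ℤ) := shortExact_moduleCatMk
    (f := (LinearMap.range (d (j + 1))).subtype) (g := (d j).rangeRestrict)
    (LinearMap.exact_iff.mpr (by rw [LinearMap.ker_rangeRestrict, hker, Submodule.range_subtype]))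
    Subtype.coe_injective (d j).surjective_rangeRestrict
  have hext (j : ℤ) (φ : ModuleCat.of R (LinearMap.range (d (j + 1))) ⟶ Y) :
      ∃ ψ : ModuleCat.of R (P (j + 1)) ⟶ Y,
        ModuleCat.ofHom (LinearMap.range (d (j + 1))).subtype ≫ ψ = φ := by
    have hg : (φ.hom ∘ₗ (d (j + 1)).rangeRestrict) ∘ₗ d (j + 1 + 1) = 0 := by
      ext x
      have h0 : (d (j + 1)).rangeRestrict (d (j + 1 + 1) x) = 0 :=
        Subtype.ext (LinearMap.congr_fun (hcomp (j + 1)) x)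
      simp [h0]
    obtain ⟨h, hh⟩ := hfact Y inferInstance (j + 1) _ hg
    refine ⟨ModuleCat.ofHom h, ?_⟩
    ext ⟨_, x, rfl⟩
    exact (LinearMap.congr_fun hh x).symm
  have hone (j : ℤ) : Subsingleton (Ext.{u} (ModuleCat.of R (LinearMap.range (d j))) Y 1) := by
    have := hP (j + 1)
    exact (hS j).subsingleton_ext_one_X₃ (hext j)
      (Ext.subsingleton_of_projective (ModuleCat.of R (P (j + 1))) Y 0)
  have hsucc (k : ℕ) (j : ℤ) :
      Subsingleton (Ext.{u} (ModuleCat.of R (LinearMap.range (d j))) Y (k + 1)) := by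
    induction k generalizing j with
    | zero => exact hone j
    | succ k ih =>
      have := hP (j + 1)
      exact (hS j).subsingleton_ext_X₃_succ (ih (j + 1))
        (Ext.subsingleton_of_projective (ModuleCat.of R (P (j + 1))) Y _)
  exact Ext.subsingleton_of_iso e.toModuleIso.symm (hsucc k 0)

lemma subsingleton_ext_of_gpdLE (Y : ModuleCat.{u} R) [Module.Projective R Y] :
    ∀ (n : ℕ) (M : ModuleCat.{u} R), GpdLE R n M → Subsingleton (Ext.{u} M Y (n + 1))
  | 0, _, hM => subsingleton_ext_of_isGProjective hM Y 0
  | n + 1, _, ⟨_, _, hG, hp, hK⟩ =>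
    (LinearMap.shortExact_shortComplexKer hp).subsingleton_ext_X₃_succ
      (subsingleton_ext_of_gpdLE Y n _ hK) (subsingleton_ext_of_isGProjective hG Y (n + 1))

variable {N : Type u} [AddCommGroup N] [Module R N]

lemma subsingleton_ext_one_of_isSyzygy_self {F : Type u} [AddCommGroup F] [Module R F]
    [Module.Projective R F] {i : N →ₗ[R] F} {p : F →ₗ[R] N} (hip : Function.Exact i p)
    (hi : Function.Injective i) (hp : Function.Surjective p) (Y : ModuleCat.{u} R) (k : ℕ)
    (hk : Subsingleton (Ext.{u} (ModuleCat.of R N) Y (k + 1))) :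
    Subsingleton (Ext.{u} (ModuleCat.of R N) Y 1) := by
  induction k with
  | zero => exact hk
  | succ k ih =>
    exact ih ((shortExact_moduleCatMk hip hi hp).subsingleton_ext_X₁
      (Ext.subsingleton_of_projective (ModuleCat.of R F) Y k) hk)

lemma isSGProjective_of_exact {F : ModuleCat.{u} R} [Module.Projective R F] {i : N →ₗ[R] F}
    {p : F →ₗ[R] N} (hip : Function.Exact i p) (hi : Function.Injective i)
    (hp : Function.Surjective p)
    (hN : ∀ Q : ModuleCat.{u} R, Module.Projective R Q →
      Subsingleton (Ext.{u} (ModuleCat.of R N) Q 1)) :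
    IsSGProjective R N := by
  have hrange : LinearMap.range (i ∘ₗ p) = LinearMap.range i :=
    LinearMap.range_comp_of_range_eq_top i (LinearMap.range_eq_top.mpr hp)
  have hker : LinearMap.ker (i ∘ₗ p) = LinearMap.ker p :=
    LinearMap.ker_comp_of_ker_eq_bot p (LinearMap.ker_eq_bot.mpr hi)
  refine ⟨F, inferInstance, i ∘ₗ p, ?_, ?_, ⟨?_⟩, ?_⟩
  · ext x
    simp [hip.apply_apply_eq_zero]
  · rw [hker, hrange, LinearMap.exact_iff.mp hip]
  · exact (LinearEquiv.ofInjective i hi).trans (LinearEquiv.ofEq _ _ hrange.symm)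
  intro Q hQ g hg
  have hS := shortExact_moduleCatMk hip hi hp
  have := hS.epi_g
  have hgi : g ∘ₗ i = 0 := by
    ext y
    obtain ⟨x, rfl⟩ := hp y
    exact LinearMap.congr_fun hg x
  obtain ⟨ψ, hψ⟩ := hS.exists_f_comp_eq (hN Q hQ) (hS.exact.desc (ModuleCat.ofHom g)
    (ModuleCat.hom_ext hgi))
  refine ⟨ψ.hom, ?_⟩
  have hdesc := hS.exact.g_desc (ModuleCat.ofHom g) (ModuleCat.hom_ext hgi)
  rw [← hψ] at hdesc
  exact (congrArg ModuleCat.Hom.hom hdesc).symm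

end Modules

/-- Over a perfect ring (every flat module is projective) of Gorenstein
global dimension at most `n`, a module `N` admitting a short exact sequence
`0 → N → F → N → 0` with `F` flat satisfies `Ext¹_R(N, P) = 0` for every projective `P`,
hence is strongly Gorenstein projective. -/
theorem stmt16 (R : Type u) [CommRing R]
    (hperf : ∀ M : ModuleCat.{u} R, Module.Flat R M → Module.Projective R M)
    (n : ℕ) (hgl : ∀ M : ModuleCat.{u} R, GpdLE R n M)
    (N : Type u) [AddCommGroup N] [Module R N]
    (F : ModuleCat.{u} R) (hF : Module.Flat R F)
    (i : N →ₗ[R] F) (p : F →ₗ[R] N)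
    (hi : Function.Injective i) (hp : Function.Surjective p)
    (he : LinearMap.range i = LinearMap.ker p) :
    (∀ P : ModuleCat.{u} R, Module.Projective R P → Ext1Zero R N P) ∧
      IsSGProjective R N := by
  have : Module.Projective R F := hperf F hF
  have hip : Function.Exact i p := LinearMap.exact_iff.mpr he.symm
  have hN (Q : ModuleCat.{u} R) (hQ : Module.Projective R Q) :
      Subsingleton (Ext.{u} (ModuleCat.of R N) Q 1) :=
    subsingleton_ext_one_of_isSyzygy_self hip hi hp Q n
      (subsingleton_ext_of_gpdLE Q n _ (hgl (ModuleCat.of R N)))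
  exact ⟨fun Q hQ => ext1Zero_of_subsingleton_ext (hN Q hQ), isSGProjective_of_exact hip hi hp hN⟩
end
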